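/- arXiv:1606.03685 — 2 statements merged into one kernel-verified Lean document; each statement's English description precedes it below -/
import Mathlib

section
/- Let p be a probability measure on ℝ^d and define the kernel κ : ℝ^d → ℝ by κ(δ) = ∫ cos(⟨ω, δ⟩) dp(ω). For ω ∈ ℝ^d and b ∈ ℝ define z_{ω,b}(x) = √2·cos(⟨ω, x⟩ + b). Then for all x, y ∈ ℝ^d, the expectation of z_{ω,b}(x)·z_{ω,b}(y), where ω is drawn from p and b is drawn (independently) from the uniform distribution on [0, 2π], equals κ(x − y); that is, ∫_{ℝ^d} (1/(2π)) ∫_0^{2π} 2 cos(⟨ω,x⟩ + b) cos(⟨ω,y⟩ + b) db dp(ω) = κ(x − y). -/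
/-!
For each fixed `ω` the average over `b` already equals `cos ⟪ω, x - y⟫`: by the product-to-sum
formula `2 cos (α + b) cos (β + b) = cos (α - β) + cos (α + β + 2b)`, and the second term
integrates to zero over a full period in `b`. Integrating this identity against `p` gives `κ (x - y)`.
-/

open MeasureTheory Real

theorem integral_cos_add_two_mul (c : ℝ) : ∫ b in (0:ℝ)..(2 * π), cos (c + 2 * b) = 0 := by
  have hsin : sin (c + 2 * (2 * π)) = sin c := by
    simpa [two_mul] using (sin_periodic.nat_mul 2) c
  rw [intervalIntegral.integral_comp_add_mul (fun t => cos t) two_ne_zero, integral_cos, hsin]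
  simp

theorem integral_two_mul_cos_add_mul_cos_add (a c : ℝ) :
    ∫ b in (0:ℝ)..(2 * π), 2 * cos (a + b) * cos (c + b) = 2 * π * cos (a - c) := by
  have product_to_sum : ∀ b, 2 * cos (a + b) * cos (c + b) = cos (a - c) + cos (a + c + 2 * b) :=
    fun b => by rw [two_mul_cos_mul_cos]; ring_nf
  simp_rw [product_to_sum]
  rw [intervalIntegral.integral_add intervalIntegrable_const
      ((by fun_prop : Continuous fun b => cos (a + c + 2 * b)).intervalIntegrable _ _),
    integral_cos_add_two_mul]
  simp

theorem rff_kernel_expectation_general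
    {d : ℕ} (p : Measure (EuclideanSpace ℝ (Fin d)))
    (κ : EuclideanSpace ℝ (Fin d) → ℝ)
    (hκ : ∀ δ, κ δ = ∫ ω, Real.cos (inner ℝ ω δ : ℝ) ∂p)
    (x y : EuclideanSpace ℝ (Fin d)) :
    ∫ ω, ((1 / (2 * π)) *
        ∫ b in (0:ℝ)..(2 * π),
          2 * Real.cos ((inner ℝ ω x : ℝ) + b) * Real.cos ((inner ℝ ω y : ℝ) + b)) ∂p
      = κ (x - y) := by
  rw [hκ]
  congr 1 with ω
  rw [integral_two_mul_cos_add_mul_cos_add, inner_sub_right]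
  field_simp

/-- Random Fourier feature representation of a shift-invariant kernel:
if `κ δ = ∫ cos ⟪ω, δ⟫ ∂p` for a probability measure `p` on `ℝ^d`, then for all `x y`,
averaging `z_{ω,b}(x) z_{ω,b}(y) = 2 cos(⟪ω,x⟫+b) cos(⟪ω,y⟫+b)` over `ω ~ p` and
`b` uniform on `[0, 2π]` recovers `κ (x - y)`. -/
theorem rff_kernel_expectation
    {d : ℕ} (p : Measure (EuclideanSpace ℝ (Fin d))) [IsProbabilityMeasure p]
    (κ : EuclideanSpace ℝ (Fin d) → ℝ)
    (hκ : ∀ δ, κ δ = ∫ ω, Real.cos (inner ℝ ω δ : ℝ) ∂p)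
    (x y : EuclideanSpace ℝ (Fin d)) :
    ∫ ω, ((1 / (2 * π)) *
        ∫ b in (0:ℝ)..(2 * π),
          2 * Real.cos ((inner ℝ ω x : ℝ) + b) * Real.cos ((inner ℝ ω y : ℝ) + b)) ∂p
      = κ (x - y) :=
  rff_kernel_expectation_general p κ hκ x y
end

section
/- Let σ_X > 0, let x be a random vector in ℝ^d distributed as N(0, σ_X²·I_d), and let ω_1, …, ω_D ∈ ℝ^d and b_1, …, b_D ∈ ℝ satisfy: ω_i ≠ ω_j and ω_i ≠ −ω_j for all i ≠ j, and ω_i ≠ 0 for all i. Define the random vector z(x) ∈ ℝ^D with components z_i(x) = √2·cos(⟨ω_i, x⟩ + b_i). Then the matrix R_zz = E[z(x) z(x)ᵀ] is strictly positive definite; equivalently, for every nonzero θ ∈ ℝ^D, θᵀ R_zz θ = E[(∑_{i=1}^D θ_i √2 cos(⟨ω_i, x⟩ + b_i))²] > 0. -/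
open MeasureTheory ProbabilityTheory Real

/-- The character `v ↦ exp(i⟨w,v⟩)` on the additive group `Fin d → ℝ`. -/
noncomputable def rffChar {d : ℕ} (w : Fin d → ℝ) : Multiplicative (Fin d → ℝ) →* ℂ where
  toFun v := Complex.exp ((↑(∑ k, w k * Multiplicative.toAdd v k) : ℂ) * Complex.I)
  map_one' := by simp
  map_mul' u v := by
    simp only [toAdd_mul, Pi.add_apply]
    rw [← Complex.exp_add, ← add_mul, ← Complex.ofReal_add, ← Finset.sum_add_distrib]
    simp [mul_add]

lemma rffChar_injective {d : ℕ} : Function.Injective (rffChar (d := d)) := by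
  intro w w' h
  by_contra hww
  obtain ⟨k, hk⟩ := Function.ne_iff.mp hww
  set c : ℝ := Real.pi / (w k - w' k) with hc
  have hsub : w k - w' k ≠ 0 := sub_ne_zero.mpr hk
  have hval := DFunLike.congr_fun h (Multiplicative.ofAdd (Pi.single k c))
  simp only [rffChar, MonoidHom.coe_mk, OneHom.coe_mk, toAdd_ofAdd] at hval
  have hsum : ∀ u : Fin d → ℝ, (∑ j, u j * (Pi.single k c : Fin d → ℝ) j) = u k * c := by
    intro u
    rw [Finset.sum_eq_single k]
    · simp
    · intro j _ hj
      rw [Pi.single_apply]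
      simp [hj]
    · simp
  rw [hsum w, hsum w'] at hval
  have h1 : Complex.exp ((w k * c - w' k * c : ℝ) * Complex.I) = 1 := by
    rw [Complex.ofReal_sub, sub_mul, Complex.exp_sub, hval, div_self]
    exact Complex.exp_ne_zero _
  have hπ : (w k * c - w' k * c : ℝ) = Real.pi := by
    rw [hc]; field_simp
  rw [hπ, Complex.exp_pi_mul_I] at h1
  norm_num at h1

/-- The trig polynomial is not identically zero. -/
lemma rff_exists_ne_zero {d D : ℕ}
    (ω : Fin D → Fin d → ℝ) (b : Fin D → ℝ)
    (hne : ∀ i j : Fin D, i ≠ j → ω i ≠ ω j ∧ ω i ≠ -ω j)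
    (hnz : ∀ i : Fin D, ω i ≠ 0)
    (θ : Fin D → ℝ) (hθ : θ ≠ 0) :
    ∃ v : Fin d → ℝ,
      (∑ i, θ i * (Real.sqrt 2 * Real.cos ((∑ k, ω i k * v k) + b i))) ≠ 0 := by
  by_contra hcon
  push_neg at hcon
  set W : Fin D × Bool → (Fin d → ℝ) := fun p => if p.2 then ω p.1 else -ω p.1 with hW
  set c : Fin D × Bool → ℂ := fun p =>
    ((θ p.1 * Real.sqrt 2 / 2 : ℝ) : ℂ) *
      Complex.exp ((if p.2 then (b p.1 : ℂ) else -(b p.1 : ℂ)) * Complex.I) with hcdef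
  have hWinj : Function.Injective W := by
    rintro ⟨i, s⟩ ⟨j, t⟩ hpq
    simp only [hW] at hpq
    have hself : ∀ m : Fin D, ω m ≠ -ω m := by
      intro m hm
      apply hnz m
      have : (2 : ℝ) • ω m = 0 := by rw [two_smul]; nth_rewrite 2 [hm]; simp
      simpa using (smul_eq_zero.mp this).resolve_left (by norm_num)
    by_cases hij : i = j
    · subst hij
      cases s <;> cases t <;>
        simp only [if_true, if_false, Bool.false_eq_true] at hpq
      · rfl
      · exact absurd (neg_eq_iff_eq_neg.mp hpq) (hself i)
      · exact absurd hpq (hself i)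
      · rfl
    · exfalso
      cases s <;> cases t <;> simp only [if_true, if_false, Bool.false_eq_true] at hpq
      · exact (hne i j hij).1 (neg_injective hpq)
      · exact (hne j i (Ne.symm hij)).2 hpq.symm
      · exact (hne i j hij).2 hpq
      · exact (hne i j hij).1 hpq
  have hinj : Function.Injective fun p : Fin D × Bool => rffChar (W p) :=
    rffChar_injective.comp hWinj
  have hli : LinearIndependent ℂ
      fun p : Fin D × Bool =>
        ((rffChar (W p)) : Multiplicative (Fin d → ℝ) → ℂ) :=
    (linearIndependent_monoidHom (Multiplicative (Fin d → ℝ)) ℂ).comp _ hinj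
  have hsum0 : (∑ p : Fin D × Bool, c p •
      ((rffChar (W p)) : Multiplicative (Fin d → ℝ) → ℂ)) = 0 := by
    funext v
    have hv := hcon (Multiplicative.toAdd v)
    simp only [Finset.sum_apply, Pi.smul_apply, smul_eq_mul, Pi.zero_apply]
    rw [Fintype.sum_prod_type]
    have hterm : ∀ i : Fin D, ∑ s : Bool, c (i, s) * rffChar (W (i, s)) v =
        ((θ i * (Real.sqrt 2 * Real.cos ((∑ k, ω i k * Multiplicative.toAdd v k) + b i)) : ℝ) : ℂ) := by
      intro i
      set S : ℝ := ∑ k, ω i k * Multiplicative.toAdd v k with hS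
      have hSneg : (∑ k, (-ω i) k * Multiplicative.toAdd v k) = -S := by
        rw [hS, ← Finset.sum_neg_distrib]
        exact Finset.sum_congr rfl (fun k _ => by simp)
      have etrue : rffChar (W (i, true)) v = Complex.exp ((S : ℂ) * Complex.I) := by
        simp only [hW, rffChar, MonoidHom.coe_mk, OneHom.coe_mk, if_true, ← hS]
      have efalse : rffChar (W (i, false)) v = Complex.exp (-(S : ℂ) * Complex.I) := by
        simp only [hW, rffChar, MonoidHom.coe_mk, OneHom.coe_mk, Bool.false_eq_true, if_false]
        rw [hSneg]; push_cast; ring_nf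
      rw [Fintype.sum_bool, etrue, efalse]
      simp only [hcdef, if_true, Bool.false_eq_true, if_false]
      rw [mul_assoc, mul_assoc, ← Complex.exp_add, ← Complex.exp_add,
        ← add_mul, ← add_mul]
      have e1 : (b i : ℂ) + S = ((S + b i : ℝ) : ℂ) := by push_cast; ring
      have e2 : -(b i : ℂ) + -S = -((S + b i : ℝ) : ℂ) := by push_cast; ring
      rw [e1, e2]
      have hcs := Complex.cos_add_sin_I ((S + b i : ℝ) : ℂ)
      have hcs' := Complex.cos_sub_sin_I ((S + b i : ℝ) : ℂ)
      rw [← hcs, ← hcs']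
      rw [← Complex.ofReal_cos]
      push_cast
      ring
    calc (∑ i : Fin D, ∑ s : Bool, c (i, s) * rffChar (W (i, s)) v)
        = ∑ i : Fin D, ((θ i * (Real.sqrt 2 *
            Real.cos ((∑ k, ω i k * Multiplicative.toAdd v k) + b i)) : ℝ) : ℂ) :=
          Finset.sum_congr rfl (fun i _ => hterm i)
      _ = ((∑ i, θ i * (Real.sqrt 2 *
            Real.cos ((∑ k, ω i k * Multiplicative.toAdd v k) + b i)) : ℝ) : ℂ) := by
          push_cast; ring
      _ = 0 := by rw [hv]; simp
  obtain ⟨i0, hi0⟩ := Function.ne_iff.mp hθ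
  have hc0 := Fintype.linearIndependent_iff.mp hli c hsum0 (i0, true)
  simp only [hcdef, if_true] at hc0
  rcases mul_eq_zero.mp hc0 with h | h
  · have : θ i0 * Real.sqrt 2 / 2 = 0 := by exact_mod_cast h
    have h2 : Real.sqrt 2 ≠ 0 := by positivity
    rcases mul_eq_zero.mp (by linarith : θ i0 * Real.sqrt 2 = 0) with h' | h'
    · exact hi0 (by simpa using h')
    · exact h2 h'
  · exact Complex.exp_ne_zero _ h

/-- Strict positive definiteness of the random-Fourier-feature autocorrelation matrix:
if `x ~ N(0, σ_X² I_d)` and the frequencies satisfy `ω_i ≠ ±ω_j` for `i ≠ j` and `ω_i ≠ 0`,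
then for every nonzero `θ ∈ ℝ^D`,
`θᵀ R_zz θ = E[(∑ i θ_i √2 cos(⟨ω_i, x⟩ + b_i))²] > 0`. -/
theorem rff_autocorrelation_posdef
    {d D : ℕ} {Ω : Type*} [MeasureSpace Ω] [IsProbabilityMeasure (ℙ : Measure Ω)]
    (σX : ℝ) (hσX : 0 < σX) (x : Ω → Fin d → ℝ) (hx : Measurable x)
    (hlaw : Measure.map x ℙ = Measure.pi fun _ : Fin d => gaussianReal 0 (Real.toNNReal (σX ^ 2)))
    (ω : Fin D → Fin d → ℝ) (b : Fin D → ℝ)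
    (hne : ∀ i j : Fin D, i ≠ j → ω i ≠ ω j ∧ ω i ≠ -ω j)
    (hnz : ∀ i : Fin D, ω i ≠ 0)
    (θ : Fin D → ℝ) (hθ : θ ≠ 0) :
    0 < ∫ ωΩ, (∑ i, θ i * (Real.sqrt 2 * Real.cos ((∑ k, ω i k * x ωΩ k) + b i))) ^ 2 := by
  set g : (Fin d → ℝ) → ℝ :=
    fun v => ∑ i, θ i * (Real.sqrt 2 * Real.cos ((∑ k, ω i k * v k) + b i)) with hg
  have hgcont : Continuous g := by
    refine continuous_finset_sum _ fun i _ => continuous_const.mul (continuous_const.mul ?_)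
    exact Real.continuous_cos.comp
      ((continuous_finset_sum _ fun k _ => continuous_const.mul (continuous_apply k)).add
        continuous_const)
  set G : (Fin d → ℝ) → ℝ := fun v => (g v) ^ 2 with hG
  have hGcont : Continuous G := hgcont.pow 2
  set μπ : Measure (Fin d → ℝ) :=
    Measure.pi fun _ : Fin d => gaussianReal 0 (Real.toNNReal (σX ^ 2)) with hμπ
  have hvne : Real.toNNReal (σX ^ 2) ≠ 0 := by
    refine (Real.toNNReal_pos.mpr (by positivity)).ne'
  haveI : Measure.IsOpenPosMeasure (gaussianReal 0 (Real.toNNReal (σX ^ 2))) := by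
    refine ⟨fun U hU hUne h0 => ?_⟩
    exact (hU.measure_pos volume hUne).ne'
      ((gaussianReal_absolutelyContinuous' 0 hvne) h0)
  haveI : Measure.IsOpenPosMeasure μπ := by rw [hμπ]; infer_instance
  have hkey : ∫ ωΩ, G (x ωΩ) = ∫ v, G v ∂μπ := by
    rw [← hlaw, integral_map hx.aemeasurable hGcont.aestronglyMeasurable]
  show 0 < ∫ ωΩ, G (x ωΩ)
  rw [hkey]
  -- integrability
  have hbound : ∀ v, ‖G v‖ ≤ (∑ i, |θ i| * Real.sqrt 2) ^ 2 := by
    intro v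
    have hgv : |g v| ≤ ∑ i, |θ i| * Real.sqrt 2 := by
      refine (Finset.abs_sum_le_sum_abs _ _).trans ?_
      refine Finset.sum_le_sum fun i _ => ?_
      rw [abs_mul, abs_mul]
      have h1 : |Real.sqrt 2| = Real.sqrt 2 := abs_of_nonneg (Real.sqrt_nonneg 2)
      rw [h1]
      have h2 := mul_le_of_le_one_right (Real.sqrt_nonneg 2)
        (Real.abs_cos_le_one ((∑ k, ω i k * v k) + b i))
      exact mul_le_mul_of_nonneg_left h2 (abs_nonneg _)
    show ‖g v ^ 2‖ ≤ _
    rw [Real.norm_eq_abs, abs_pow]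
    exact pow_le_pow_left₀ (abs_nonneg _) hgv 2
  haveI : IsProbabilityMeasure μπ := by rw [hμπ]; infer_instance
  have hint : Integrable G μπ :=
    (integrable_const ((∑ i, |θ i| * Real.sqrt 2) ^ 2)).mono'
      hGcont.aestronglyMeasurable (ae_of_all _ hbound)
  rw [integral_pos_iff_support_of_nonneg (fun v => sq_nonneg (g v)) hint]
  obtain ⟨v0, hv0⟩ := rff_exists_ne_zero ω b hne hnz θ hθ
  have hv0' : G v0 ≠ 0 := pow_ne_zero 2 hv0
  exact (hGcont.isOpen_support).measure_pos μπ ⟨v0, hv0'⟩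
end
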